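/- Let H₀, H₁ be Hopf algebras over a field k with Hopf algebra morphisms d₀, d₁ : H₁ → H₀ and s₀ : H₀ → H₁ satisfying d₀ ∘ s₀ = d₁ ∘ s₀ = id. Let f(a) = Σ a' · s₀(d₀(S(a''))) and set A¹₀₀ = RKer(d₀) = {a ∈ H₁ : Σ a' ⊗ d₀(a'') = a ⊗ 1}. Then the restriction ∂₁ of d₁ to A¹₀₀ is a twisted Hopf algebra map: for every a ∈ A¹₀₀, Σ d₁(f(a')) · d₀(a'') ⊗ d₁(a''') = Σ (d₁(a))' ⊗ (d₁(a))'' in H₀ ⊗ H₀, where the left-hand side is Δ_{H₀} composed via the braided coproduct Δ_A(a) = Σ f(a') ⊗ a'' and the coaction φ(a) = Σ d₀(a') ⊗ a''. -/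

import Mathlib

open TensorProduct

/-- `RKer(Ω) = {v : Σ v' ⊗ Ω(v'') = v ⊗ 1}`. -/
def RKer (k : Type*) {I H : Type*} [CommSemiring k] [Semiring I] [Semiring H]
    [HopfAlgebra k I] [HopfAlgebra k H] (Ω : I →ₐc[k] H) : Set I :=
  {v : I |
    TensorProduct.map (LinearMap.id : I →ₗ[k] I) Ω.toLinearMap (Coalgebra.comul (R := k) v)
      = v ⊗ₜ[k] (1 : H)}

/-- The kernel generator map `f(a) = Σ a' · s(d(S(a'')))`. -/
noncomputable def fgen {k A B : Type*} [Field k] [Ring A] [Ring B]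
    [HopfAlgebra k A] [HopfAlgebra k B] (d : A →ₐc[k] B) (s : B →ₐc[k] A) : A →ₗ[k] A :=
  (LinearMap.mul' k A)
    ∘ₗ (TensorProduct.map LinearMap.id
          (s.toLinearMap ∘ₗ d.toLinearMap ∘ₗ HopfAlgebra.antipode (R := k)))
    ∘ₗ (Coalgebra.comul (R := k))

/-! In the convolution algebra of linear maps `H₁ → H₀`, the hypothesis `d₁ ∘ s₀ = id` gives
`d₁ ∘ f = d₁ ⋆ (d₀ ∘ S)`, and `d₀ ∘ S` is the convolution inverse of the algebra map `d₀`.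
Hence `(d₁ ∘ f) ⋆ d₀ = d₁`, so the left-hand side is `(d₁ ⊗ d₁)(Δ a) = Δ (d₁ a)`. -/

open Coalgebra HopfAlgebra LinearMap WithConv

theorem AlgHom.toConv_comp_antipode_mul_toConv {R A B : Type*} [CommSemiring R] [Semiring A]
    [HopfAlgebra R A] [Semiring B] [Algebra R B] (φ : A →ₐ[R] B) :
    toConv (φ.toLinearMap ∘ₗ antipode R) * toConv φ.toLinearMap = 1 := by
  have h := algHom_comp_convMul_distrib φ (toConv (antipode R (A := A))) (toConv LinearMap.id)
  rw [antipode_mul_id, LinearMap.comp_id] at h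
  apply ofConv_injective
  rw [← h]
  ext a
  simp

section

variable {k A B : Type*} [Field k] [Ring A] [Ring B] [HopfAlgebra k A] [HopfAlgebra k B]

theorem toConv_comp_fgen (d : A →ₐc[k] B) (s : B →ₐc[k] A) (d' : A →ₐ[k] B)
    (hs : ∀ b, d' (s b) = b) :
    toConv (d'.toLinearMap ∘ₗ fgen d s) =
      toConv d'.toLinearMap * toConv (d.toLinearMap ∘ₗ antipode k) := by
  have hs' : d'.toLinearMap ∘ₗ s.toLinearMap = LinearMap.id := LinearMap.ext hs
  have hfgen : fgen d s =
      (toConv LinearMap.id * toConv (s.toLinearMap ∘ₗ d.toLinearMap ∘ₗ antipode k)).ofConv := rfl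
  rw [hfgen, algHom_comp_convMul_distrib, LinearMap.comp_id, ← LinearMap.comp_assoc, hs',
    LinearMap.id_comp]

theorem toConv_comp_fgen_mul_toConv (d : A →ₐc[k] B) (s : B →ₐc[k] A) (d' : A →ₐ[k] B)
    (hs : ∀ b, d' (s b) = b) :
    toConv (d'.toLinearMap ∘ₗ fgen d s) * toConv d.toLinearMap = toConv d'.toLinearMap := by
  calc _ = toConv d'.toLinearMap * 1 := by
        rw [toConv_comp_fgen d s d' hs, mul_assoc]
        exact congrArg _ (AlgHom.toConv_comp_antipode_mul_toConv (d : A →ₐ[k] B))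
    _ = _ := mul_one _

end

theorem TensorProduct.map_ofConv_convMul {R A C D E : Type*} [CommSemiring R] [Semiring A]
    [Algebra R A] [AddCommMonoid C] [Module R C] [CoalgebraStruct R C] [AddCommMonoid D]
    [Module R D] [AddCommMonoid E] [Module R E]
    (f g : C →ₗ[R] A) (h : D →ₗ[R] E) :
    map (toConv f * toConv g).ofConv h =
      map (mul' R A) LinearMap.id ∘ₗ map (map f g) h ∘ₗ rTensor D comul := by
  ext c d
  simp

theorem twisted_hopf_map_general {k H0 H1 : Type*} [Field k] [Ring H0] [Ring H1]
    [HopfAlgebra k H0] [HopfAlgebra k H1]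
    (d0 d1 : H1 →ₐc[k] H0) (s0 : H0 →ₐc[k] H1)
    (hd1s0 : ∀ a : H0, d1 (s0 a) = a)
    (a : H1) :
    TensorProduct.map (LinearMap.mul' k H0) LinearMap.id
        (TensorProduct.map
          (TensorProduct.map (d1.toLinearMap ∘ₗ fgen d0 s0) d0.toLinearMap) d1.toLinearMap
          (TensorProduct.map (Coalgebra.comul (R := k)) LinearMap.id
            (Coalgebra.comul (R := k) a)))
      = Coalgebra.comul (R := k) (d1 a) := by
  have htwist : toConv (d1.toLinearMap ∘ₗ fgen d0 s0) * toConv d0.toLinearMap =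
      toConv d1.toLinearMap :=
    toConv_comp_fgen_mul_toConv d0 s0 (d1 : H1 →ₐ[k] H0) hd1s0
  calc _ = map (toConv (d1.toLinearMap ∘ₗ fgen d0 s0) * toConv d0.toLinearMap).ofConv
          d1.toLinearMap (comul a) := by
        rw [TensorProduct.map_ofConv_convMul]; rfl
    _ = map d1.toLinearMap d1.toLinearMap (comul a) := by rw [htwist]
    _ = comul (d1 a) := CoalgHomClass.map_comp_comul_apply d1 a

/-- the restriction `∂₁` of `d₁` to `A¹₀₀ = RKer(d₀)` is a twisted Hopf
algebra map: for every `a ∈ A¹₀₀`,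
`Σ d₁(f(a')) · d₀(a'') ⊗ d₁(a''') = Δ(d₁(a))`. -/
theorem twisted_hopf_map {k H0 H1 : Type*} [Field k] [Ring H0] [Ring H1]
    [HopfAlgebra k H0] [HopfAlgebra k H1]
    (d0 d1 : H1 →ₐc[k] H0) (s0 : H0 →ₐc[k] H1)
    (hd0s0 : ∀ a : H0, d0 (s0 a) = a) (hd1s0 : ∀ a : H0, d1 (s0 a) = a)
    (a : H1) (ha : a ∈ RKer k d0) :
    TensorProduct.map (LinearMap.mul' k H0) LinearMap.id
        (TensorProduct.map
          (TensorProduct.map (d1.toLinearMap ∘ₗ fgen d0 s0) d0.toLinearMap) d1.toLinearMap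
          (TensorProduct.map (Coalgebra.comul (R := k)) LinearMap.id
            (Coalgebra.comul (R := k) a)))
      = Coalgebra.comul (R := k) (d1 a) :=
  twisted_hopf_map_general d0 d1 s0 hd1s0 a
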